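/- arXiv:2204.04566 — 3 statements merged into one kernel-verified Lean document; each statement's English description precedes it below -/
import Mathlib

section
/- For any finite set $Y \subseteq \mathbb{C}^n$, the quotient ring $\widehat{A}(Y) = \mathbb{C}[x_1,\dots,x_n]/T(Y)$ is a finite-dimensional $\mathbb{C}$-vector space of dimension exactly $|Y|$, the number of points of $Y$. -/
/-!
Let `T(I)` be the ideal spanned by the top forms of the elements of an ideal `I ⊆ ℂ[x]`. Choose a
complement `M` of `T(I)` spanned by homogeneous polynomials; then `M` is also a complement of `I`.
It meets `I` trivially, since a nonzero `f ∈ M ∩ I` would have a nonzero top form in `M ∩ T(I)`.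
It spans modulo `I` because every element of `T(I)` of degree `d` is the top form of some `u ∈ I`
of degree `d`, and the lower components of `u` are handled by induction on the degree. Hence
`ℂ[x]/T(I) ≅ M ≅ ℂ[x]/I` as vector spaces, and for `I = I(Y)` the Chinese remainder theorem
identifies `ℂ[x]/I(Y)` with `ℂ^Y`.
-/

open MvPolynomial

noncomputable section

/-- The top degree component of a polynomial. -/
def topComponent {n : ℕ} (f : MvPolynomial (Fin n) ℂ) : MvPolynomial (Fin n) ℂ :=
  homogeneousComponent f.totalDegree f

/-- The top degree (associated graded) ideal `T(Y)` of a set `Y ⊆ ℂⁿ`. -/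
def topIdeal {n : ℕ} (Y : Set (Fin n → ℂ)) : Ideal (MvPolynomial (Fin n) ℂ) :=
  Ideal.span {g | ∃ f ∈ vanishingIdeal ℂ Y, f ≠ 0 ∧ topComponent f = g}

/-- The orbit of a point of `ℂⁿ` under the symmetric group permuting coordinates. -/
def permOrbit {n : ℕ} (P : Fin n → ℂ) : Set (Fin n → ℂ) :=
  {R | ∃ σ : Equiv.Perm (Fin n), R = P ∘ σ}

theorem Submodule.exists_isCompl_span_subset {K V : Type*} [DivisionRing K] [AddCommGroup V]
    [Module K V] (p : Submodule K V) {s : Set V} (hs : span K s = ⊤) :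
    ∃ t ⊆ s, IsCompl p (span K t) := by
  obtain ⟨κ, a, -, hspan, hli⟩ := exists_linearIndependent' K (p.mkQ ∘ ((↑) : s → V))
  refine ⟨Set.range fun i => (a i : V), Set.range_subset_iff.mpr fun i => (a i).2, ?_, ?_⟩
  · have := range_ker_disjoint (v := fun i => (a i : V)) (f := p.mkQ) hli
    rw [ker_mkQ] at this
    exact this.symm
  · rw [codisjoint_iff, ← map_mkQ_eq_top, map_span, ← Set.range_comp]
    change span K (Set.range ((p.mkQ ∘ Subtype.val) ∘ a)) = ⊤
    rw [hspan, Set.range_comp, Subtype.range_coe, ← map_span, hs, map_top, range_mkQ]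

namespace MvPolynomial

section Homogeneous

variable {σ R : Type*} [CommRing R]

theorem homogeneousComponent_mul_of_isHomogeneous {p : MvPolynomial σ R} {e : ℕ}
    (hp : p.IsHomogeneous e) (q : MvPolynomial σ R) (d : ℕ) :
    homogeneousComponent d (p * q) =
      if e ≤ d then p * homogeneousComponent (d - e) q else 0 := by
  let _ := MvPolynomial.gradedAlgebra (σ := σ) (R := R)
  have hdec (x : MvPolynomial σ R) (i : ℕ) :
      (DirectSum.decompose (homogeneousSubmodule σ R) x i : MvPolynomial σ R) =
        homogeneousComponent i x :=
    decomposition.decompose'_apply x i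
  have := DirectSum.coe_decompose_mul_of_left_mem (homogeneousSubmodule σ R) (b := q) d hp
  rwa [hdec, hdec] at this

theorem sum_homogeneousComponent_of_totalDegree_le {p : MvPolynomial σ R} {N : ℕ}
    (h : p.totalDegree ≤ N) :
    ∑ j ∈ Finset.range (N + 1), homogeneousComponent j p = p := by
  conv_rhs => rw [← sum_homogeneousComponent p]
  refine (Finset.sum_subset (Finset.range_subset_range.mpr (by omega)) fun j hj hj' => ?_).symm
  simp only [Finset.mem_range] at hj hj'
  exact homogeneousComponent_eq_zero j p (by omega)

theorem homogeneousComponent_totalDegree_ne_zero {p : MvPolynomial σ R} (hp : p ≠ 0) :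
    homogeneousComponent p.totalDegree p ≠ 0 := by
  obtain ⟨d, hd, hdeg⟩ := Finset.exists_mem_eq_sup p.support (support_nonempty.mpr hp)
    fun s => s.sum fun _ e => e
  have hdeg' : d.degree = p.totalDegree := hdeg.symm
  intro h
  have := congrArg (coeff d) h
  rw [coeff_homogeneousComponent, if_pos hdeg', coeff_zero] at this
  exact mem_support_iff.mp hd this

theorem span_setOf_isHomogeneous :
    Submodule.span R {p : MvPolynomial σ R | ∃ e, p.IsHomogeneous e} = ⊤ := by
  refine eq_top_iff.mpr fun p _ => ?_
  rw [← sum_homogeneousComponent p]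
  exact Submodule.sum_mem _ fun i _ =>
    Submodule.subset_span ⟨i, homogeneousComponent_isHomogeneous i p⟩

theorem homogeneousComponent_mem_span {s : Set (MvPolynomial σ R)}
    (hs : ∀ p ∈ s, ∃ e, p.IsHomogeneous e) {p : MvPolynomial σ R} (hp : p ∈ Submodule.span R s)
    (d : ℕ) : homogeneousComponent d p ∈ Submodule.span R s := by
  have := Submodule.mem_map_of_mem (f := homogeneousComponent d) hp
  rw [Submodule.map_span] at this
  refine Submodule.span_le.mpr ?_ this
  rintro _ ⟨q, hq, rfl⟩
  obtain ⟨e, he⟩ := hs q hq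
  rw [homogeneousComponent_of_mem he]
  split_ifs
  · exact Submodule.subset_span hq
  · exact Submodule.zero_mem _

theorem exists_isCompl_forall_homogeneousComponent_mem {K : Type*} [Field K]
    (P : Submodule K (MvPolynomial σ K)) :
    ∃ M : Submodule K (MvPolynomial σ K),
      IsCompl P M ∧ ∀ p ∈ M, ∀ d, homogeneousComponent d p ∈ M := by
  obtain ⟨t, ht, hPt⟩ := P.exists_isCompl_span_subset span_setOf_isHomogeneous
  exact ⟨_, hPt, fun p hp d => homogeneousComponent_mem_span ht hp d⟩

def topForms (I : Ideal (MvPolynomial σ R)) (d : ℕ) : Submodule R (MvPolynomial σ R) :=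
  (I.restrictScalars R ⊓ restrictTotalDegree σ R d).map (homogeneousComponent d)

theorem mul_mem_topForms {I : Ideal (MvPolynomial σ R)} {p q : MvPolynomial σ R} {e d : ℕ}
    (hp : p.IsHomogeneous e) (hed : e ≤ d) (hq : q ∈ topForms I (d - e)) :
    p * q ∈ topForms I d := by
  obtain ⟨u, ⟨huI, hu⟩, rfl⟩ := hq
  rw [SetLike.mem_coe, mem_restrictTotalDegree] at hu
  refine ⟨p * u, ⟨I.mul_mem_left p huI, ?_⟩, ?_⟩
  · rw [SetLike.mem_coe, mem_restrictTotalDegree]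
    have := hp.totalDegree_le
    have := totalDegree_mul p u
    omega
  · rw [homogeneousComponent_mul_of_isHomogeneous hp, if_pos hed]

end Homogeneous

section VanishingIdeal

variable {σ K : Type*} [Field K]

theorem isCoprime_ker_aeval {y z : σ → K} (hyz : y ≠ z) :
    IsCoprime (RingHom.ker (aeval y : MvPolynomial σ K →ₐ[K] K)) (RingHom.ker (aeval z)) := by
  have isMaximal (x : σ → K) : (RingHom.ker (aeval x : MvPolynomial σ K →ₐ[K] K)).IsMaximal :=
    RingHom.ker_isMaximal_of_surjective _ fun a => ⟨C a, aeval_C x a⟩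
  obtain ⟨i, hi⟩ := Function.ne_iff.mp hyz
  refine Ideal.isCoprime_iff_sup_eq.mpr ((isMaximal y).coprime_of_ne (isMaximal z) fun h => ?_)
  have hmem : X i - C (y i) ∈ RingHom.ker (aeval z : MvPolynomial σ K →ₐ[K] K) := by
    rw [← h]
    simp [RingHom.mem_ker]
  have : z i - y i = 0 := by simpa [RingHom.mem_ker] using hmem
  exact hi (sub_eq_zero.mp this).symm

def evalOn (Y : Set (σ → K)) : MvPolynomial σ K →ₐ[K] (Y → K) :=
  AlgHom.pi fun y => aeval y.1

@[simp]
theorem evalOn_apply (Y : Set (σ → K)) (p : MvPolynomial σ K) (y : Y) :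
    evalOn Y p y = aeval y.1 p :=
  rfl

theorem ker_evalOn (Y : Set (σ → K)) : RingHom.ker (evalOn Y) = vanishingIdeal K Y := by
  ext p
  rw [RingHom.mem_ker, mem_vanishingIdeal_iff]
  exact ⟨fun h x hx => by simpa using congrFun h ⟨x, hx⟩, fun h => by ext y; simpa using h y y.2⟩

theorem evalOn_surjective (Y : Set (σ → K)) [Finite Y] : Function.Surjective (evalOn Y) := by
  intro v
  obtain ⟨p, hp⟩ := Ideal.exists_forall_sub_mem_ideal
    (I := fun y : Y => RingHom.ker (aeval y.1 : MvPolynomial σ K →ₐ[K] K))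
    (fun y z hyz => isCoprime_ker_aeval (Subtype.coe_ne_coe.mpr hyz)) (fun y => C (v y))
  refine ⟨p, ?_⟩
  ext y
  have := hp y
  rw [RingHom.mem_ker, map_sub, aeval_C, sub_eq_zero] at this
  simpa using this

def quotientVanishingIdealEquiv (Y : Set (σ → K)) [Finite Y] :
    (MvPolynomial σ K ⧸ vanishingIdeal K Y) ≃ₐ[K] (Y → K) :=
  (Ideal.quotientEquivAlgOfEq K (ker_evalOn Y).symm).trans
    (Ideal.quotientKerAlgEquivOfSurjective (evalOn_surjective Y))

end VanishingIdeal

end MvPolynomial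

section TopIdealOf

variable {n : ℕ}

def topIdealOf (I : Ideal (MvPolynomial (Fin n) ℂ)) : Ideal (MvPolynomial (Fin n) ℂ) :=
  Ideal.span {g | ∃ f ∈ I, f ≠ 0 ∧ topComponent f = g}

theorem homogeneousComponent_mem_topForms {I : Ideal (MvPolynomial (Fin n) ℂ)}
    {t : MvPolynomial (Fin n) ℂ} (ht : t ∈ topIdealOf I) (d : ℕ) :
    homogeneousComponent d t ∈ topForms I d := by
  induction ht using Submodule.span_induction generalizing d with
  | mem g hg =>
    obtain ⟨f, hfI, -, rfl⟩ := hg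
    rw [topComponent, homogeneousComponent_of_mem (homogeneousComponent_mem _ _)]
    split_ifs with hd
    · exact ⟨f, ⟨hfI, (mem_restrictTotalDegree _ _ _).mpr hd.ge⟩, hd ▸ rfl⟩
    · exact Submodule.zero_mem _
  | zero => simp
  | add x y _ _ hx hy => simpa using Submodule.add_mem _ (hx d) (hy d)
  | smul a t _ ht =>
    rw [smul_eq_mul, ← sum_homogeneousComponent a, Finset.sum_mul, map_sum]
    refine Submodule.sum_mem _ fun e _ => ?_
    rw [homogeneousComponent_mul_of_isHomogeneous (homogeneousComponent_isHomogeneous e a)]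
    split_ifs with hed
    · exact mul_mem_topForms (homogeneousComponent_isHomogeneous e a) hed (ht (d - e))
    · exact Submodule.zero_mem _

variable {I : Ideal (MvPolynomial (Fin n) ℂ)} {M : Submodule ℂ (MvPolynomial (Fin n) ℂ)}

theorem disjoint_of_disjoint_topIdealOf (hM : ∀ p ∈ M, ∀ d, homogeneousComponent d p ∈ M)
    (h : Disjoint M ((topIdealOf I).restrictScalars ℂ)) : Disjoint M (I.restrictScalars ℂ) := by
  refine Submodule.disjoint_def.mpr fun f hfM hfI => by_contra fun hf => ?_
  exact homogeneousComponent_totalDegree_ne_zero hf <| Submodule.disjoint_def.mp h _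
    (hM f hfM _) (Ideal.subset_span ⟨f, hfI, hf, rfl⟩)

theorem codisjoint_of_codisjoint_topIdealOf (hM : ∀ p ∈ M, ∀ d, homogeneousComponent d p ∈ M)
    (h : Codisjoint M ((topIdealOf I).restrictScalars ℂ)) :
    Codisjoint M (I.restrictScalars ℂ) := by
  suffices key : ∀ c, ∀ p : MvPolynomial (Fin n) ℂ, p.IsHomogeneous c →
      p ∈ M ⊔ I.restrictScalars ℂ by
    refine codisjoint_iff.mpr (eq_top_iff.mpr fun p _ => ?_)
    rw [← sum_homogeneousComponent p]
    exact Submodule.sum_mem _ fun c _ => key c _ (homogeneousComponent_isHomogeneous c p)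
  intro c
  induction c using Nat.strong_induction_on with
  | _ c ih =>
  intro p hp
  obtain ⟨m, hm, t, ht, rfl⟩ := Submodule.mem_sup.mp (h.eq_top ▸ Submodule.mem_top : p ∈ _)
  obtain ⟨u, ⟨huI, hu⟩, hut⟩ := homogeneousComponent_mem_topForms ht c
  rw [SetLike.mem_coe, mem_restrictTotalDegree] at hu
  have hu_sum : ∑ j ∈ Finset.range c, homogeneousComponent j u + homogeneousComponent c u = u := by
    rw [← Finset.sum_range_succ, sum_homogeneousComponent_of_totalDegree_le hu]
  have hp_eq : m + t = homogeneousComponent c m +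
      (u - ∑ j ∈ Finset.range c, homogeneousComponent j u) := by
    rw [← homogeneousComponent_eq_self hp, map_add, ← hut, eq_sub_of_add_eq' hu_sum]
  rw [hp_eq]
  refine Submodule.add_mem _ (Submodule.mem_sup_left (hM m hm c)) (Submodule.sub_mem _
    (Submodule.mem_sup_right huI) (Submodule.sum_mem _ fun j hj => ?_))
  exact ih j (Finset.mem_range.mp hj) _ (homogeneousComponent_isHomogeneous j u)

theorem nonempty_linearEquiv_quotient_topIdealOf (I : Ideal (MvPolynomial (Fin n) ℂ)) :
    Nonempty ((MvPolynomial (Fin n) ℂ ⧸ topIdealOf I) ≃ₗ[ℂ] (MvPolynomial (Fin n) ℂ ⧸ I)) := by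
  obtain ⟨M, hTM, hM⟩ :=
    exists_isCompl_forall_homogeneousComponent_mem ((topIdealOf I).restrictScalars ℂ)
  have hIM : IsCompl (I.restrictScalars ℂ) M :=
    ⟨(disjoint_of_disjoint_topIdealOf hM hTM.disjoint.symm).symm,
      (codisjoint_of_codisjoint_topIdealOf hM hTM.codisjoint.symm).symm⟩
  exact ⟨(Submodule.Quotient.restrictScalarsEquiv ℂ _).symm ≪≫ₗ
    Submodule.quotientEquivOfIsCompl _ _ hTM ≪≫ₗ (Submodule.quotientEquivOfIsCompl _ _ hIM).symm ≪≫ₗ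
    Submodule.Quotient.restrictScalarsEquiv ℂ _⟩

end TopIdealOf

/-- `Â(Y) = ℂ[x]/T(Y)` has dimension `|Y|` over `ℂ`. -/
theorem dim_quotient_top_ideal {n : ℕ} (Y : Set (Fin n → ℂ)) (hY : Y.Finite) :
    FiniteDimensional ℂ (MvPolynomial (Fin n) ℂ ⧸ topIdeal Y) ∧
      Module.finrank ℂ (MvPolynomial (Fin n) ℂ ⧸ topIdeal Y) = Nat.card Y := by
  have : Finite Y := hY
  have : Fintype Y := Fintype.ofFinite Y
  obtain ⟨e⟩ := nonempty_linearEquiv_quotient_topIdealOf (vanishingIdeal ℂ Y)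
  let e' : (MvPolynomial (Fin n) ℂ ⧸ topIdeal Y) ≃ₗ[ℂ] (Y → ℂ) :=
    e ≪≫ₗ (quotientVanishingIdealEquiv Y).toLinearEquiv
  refine ⟨e'.symm.finiteDimensional, ?_⟩
  rw [e'.finrank_eq, Module.finrank_fintype_fun_eq_card, Nat.card_eq_fintype_card]
end
end

section
/- Let $P, Q \in \mathbb{C}^n$ and let $Y = S_n\langle P, Q\rangle$. The $\mathbb{C}[x_1,\dots,x_n]$-module map from $\mathbb{C}[x_1,\dots,x_n]/T(S_n\langle Q\rangle)$ to $\mathbb{C}[x_1,\dots,x_n]/T(Y)$ induced by multiplication by $x_1+\dots+x_n$ is well defined (i.e., multiplication by $x_1+\dots+x_n$ maps $T(S_n\langle Q\rangle)$ into $T(Y)$), and if moreover $T(S_n\langle P\rangle) \subseteq T(S_n\langle Q\rangle)$ and $\Sigma(P) \neq \Sigma(Q)$, then this map is injective. -/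
open MvPolynomial

noncomputable section

/-!
Since the union `Y ∪ Z` is cut out by products, `T(Y) · T(Z) ⊆ T(Y ∪ Z)`; and `e = x₁ + ⋯ + xₙ`
is the top component of `e - Σ(P)`, which vanishes on `S_n⟨P⟩`, so `e ∈ T(S_n⟨P⟩)` and
multiplication by `e` maps `T(S_n⟨Q⟩)` into `T(S_n⟨P,Q⟩)`.

For injectivity, argue one degree at a time: the degree-`d` part of `T(Y)` consists of the
degree-`d` components of elements of `I(Y)` of degree at most `d`. If `e h ∈ T(S_n⟨P,Q⟩)` with `h`
homogeneous of degree `d`, pick such a `g ∈ I(S_n⟨P,Q⟩)` of degree `≤ d + 1` with degree-`(d+1)`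
part `e h`. On a set contained in the hyperplane `e = a`, `g - (e - a) h` still vanishes and has
degree `≤ d`, so `g_d + a h ∈ T`. Taking `a = Σ(Q)`, and `a = Σ(P)` (landing in
`T(S_n⟨P⟩) ⊆ T(S_n⟨Q⟩)`), and subtracting gives `(Σ(Q) - Σ(P)) h ∈ T(S_n⟨Q⟩)`.
-/

namespace MvPolynomial

variable {σ R : Type*} [CommSemiring R]

attribute [local instance] gradedAlgebra in
theorem homogeneousComponent_mul_of_isHomogeneous_left {p : MvPolynomial σ R} {i : ℕ}
    (hp : p.IsHomogeneous i) (f : MvPolynomial σ R) (d : ℕ) :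
    homogeneousComponent d (p * f) = if i ≤ d then p * homogeneousComponent (d - i) f else 0 := by
  simpa only [← DirectSum.Decomposition.decompose'_eq, decomposition.decompose'_apply] using
    DirectSum.coe_decompose_mul_of_left_mem (homogeneousSubmodule σ R) d hp

theorem homogeneousComponent_add_mul_of_isHomogeneous_left {p : MvPolynomial σ R} {i : ℕ}
    (hp : p.IsHomogeneous i) (f : MvPolynomial σ R) (d : ℕ) :
    homogeneousComponent (i + d) (p * f) = p * homogeneousComponent d f := by
  rw [homogeneousComponent_mul_of_isHomogeneous_left hp, if_pos (Nat.le_add_right i d),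
    Nat.add_sub_cancel_left]

theorem homogeneousComponent_add_mul_of_totalDegree_le {f g : MvPolynomial σ R} {a b : ℕ}
    (hf : f.totalDegree ≤ a) (hg : g.totalDegree ≤ b) :
    homogeneousComponent (a + b) (f * g) =
      homogeneousComponent a f * homogeneousComponent b g := by
  conv_lhs => rw [← sum_homogeneousComponent f, Finset.sum_mul, map_sum]
  refine (Finset.sum_eq_single a (fun i hi hia => ?_) fun ha => ?_).trans
    (homogeneousComponent_add_mul_of_isHomogeneous_left
      (homogeneousComponent_isHomogeneous a f) g b)
  · have hia : i < a := lt_of_le_of_ne (by grind) hia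
    rw [show a + b = i + (a + b - i) by omega,
      homogeneousComponent_add_mul_of_isHomogeneous_left (homogeneousComponent_isHomogeneous i f),
      homogeneousComponent_eq_zero (a + b - i) g (by omega), mul_zero]
  · rw [homogeneousComponent_eq_zero a f (by grind), zero_mul, map_zero]

theorem totalDegree_le_of_homogeneousComponent_eq_zero {f : MvPolynomial σ R} {d : ℕ}
    (hf : f.totalDegree ≤ d + 1) (h : homogeneousComponent (d + 1) f = 0) :
    f.totalDegree ≤ d := by
  refine Finset.sup_le fun m hm => ?_
  refine Nat.le_of_lt_succ (lt_of_le_of_ne ((le_totalDegree hm).trans hf) fun hmd => ?_)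
  have hcoeff := congr_arg (coeff m) h
  rw [coeff_homogeneousComponent, if_pos (by exact hmd), coeff_zero] at hcoeff
  exact mem_support_iff.mp hm hcoeff

theorem isHomogeneous_sum_X [Fintype σ] : (∑ i : σ, X i : MvPolynomial σ R).IsHomogeneous 1 :=
  IsHomogeneous.sum _ _ _ fun i _ => isHomogeneous_X R i

def leadingForms (I : Ideal (MvPolynomial σ R)) (d : ℕ) : Submodule R (MvPolynomial σ R) :=
  (I.restrictScalars R ⊓ restrictTotalDegree σ R d).map (homogeneousComponent d)

variable {I : Ideal (MvPolynomial σ R)} {d : ℕ}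

theorem mem_leadingForms {h : MvPolynomial σ R} :
    h ∈ leadingForms I d ↔ ∃ g ∈ I, g.totalDegree ≤ d ∧ homogeneousComponent d g = h := by
  simp [leadingForms, mem_restrictTotalDegree, and_assoc]

theorem mul_mem_leadingForms {p h : MvPolynomial σ R} {i : ℕ} (hp : p.IsHomogeneous i)
    (hh : h ∈ leadingForms I d) : p * h ∈ leadingForms I (i + d) := by
  obtain ⟨g, hg, hgd, rfl⟩ := mem_leadingForms.mp hh
  exact mem_leadingForms.mpr ⟨p * g, I.mul_mem_left p hg,
    (totalDegree_mul p g).trans (add_le_add hp.totalDegree_le hgd),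
    homogeneousComponent_add_mul_of_isHomogeneous_left hp g d⟩

end MvPolynomial

section topIdeal

variable {n : ℕ} {Y Z : Set (Fin n → ℂ)}

theorem homogeneousComponent_mem_topIdeal {g : MvPolynomial (Fin n) ℂ}
    (hg : g ∈ vanishingIdeal ℂ Y) {d : ℕ} (hgd : g.totalDegree ≤ d) :
    homogeneousComponent d g ∈ topIdeal Y := by
  obtain hgd | hgd := hgd.lt_or_eq
  · rw [homogeneousComponent_eq_zero d g hgd]
    exact zero_mem _
  obtain rfl | hg0 := eq_or_ne g 0
  · rw [map_zero]
    exact zero_mem _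
  exact Ideal.subset_span ⟨g, hg, hg0, by rw [topComponent, hgd]⟩

theorem homogeneousComponent_mem_leadingForms {f : MvPolynomial (Fin n) ℂ}
    (hf : f ∈ topIdeal Y) (d : ℕ) :
    homogeneousComponent d f ∈ leadingForms (vanishingIdeal ℂ Y) d := by
  induction hf using Submodule.span_induction generalizing d with
  | mem x hx =>
    obtain ⟨g, hg, -, rfl⟩ := hx
    rw [topComponent, homogeneousComponent_of_mem (homogeneousComponent_mem _ _)]
    split_ifs with hd
    · exact mem_leadingForms.mpr ⟨g, hg, hd.ge, hd ▸ rfl⟩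
    · exact zero_mem _
  | zero => simp
  | add x y _ _ hx hy => simpa using add_mem (hx d) (hy d)
  | smul a x _ hx =>
    rw [smul_eq_mul, ← sum_homogeneousComponent a, Finset.sum_mul, map_sum]
    refine sum_mem fun i _ => ?_
    rw [homogeneousComponent_mul_of_isHomogeneous_left (homogeneousComponent_isHomogeneous i a)]
    split_ifs with hid
    · simpa [Nat.add_sub_cancel' hid] using
        mul_mem_leadingForms (homogeneousComponent_isHomogeneous i a) (hx (d - i))
    · exact zero_mem _

theorem topComponent_mul_mem_topIdeal_union {f g : MvPolynomial (Fin n) ℂ}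
    (hf : f ∈ vanishingIdeal ℂ Y) (hg : g ∈ vanishingIdeal ℂ Z) :
    topComponent f * topComponent g ∈ topIdeal (Y ∪ Z) := by
  have hfg : f * g ∈ vanishingIdeal ℂ (Y ∪ Z) := by
    rw [mem_vanishingIdeal_iff] at hf hg ⊢
    rintro x (hx | hx)
    · rw [map_mul, hf x hx, zero_mul]
    · rw [map_mul, hg x hx, mul_zero]
  rw [topComponent, topComponent, ← homogeneousComponent_add_mul_of_totalDegree_le le_rfl le_rfl]
  exact homogeneousComponent_mem_topIdeal hfg (totalDegree_mul f g)

theorem topIdeal_mul_le : topIdeal Y * topIdeal Z ≤ topIdeal (Y ∪ Z) := by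
  rw [topIdeal, topIdeal, Ideal.span_mul_span', Ideal.span_le]
  rintro _ ⟨_, ⟨f, hf, -, rfl⟩, _, ⟨g, hg, -, rfl⟩, rfl⟩
  exact topComponent_mul_mem_topIdeal_union hf hg

variable {ℓ : MvPolynomial (Fin n) ℂ} {a : ℂ}

theorem mem_topIdeal_of_sub_C_mem_vanishingIdeal (hℓ : ℓ.IsHomogeneous 1)
    (hY : ℓ - C a ∈ vanishingIdeal ℂ Y) : ℓ ∈ topIdeal Y := by
  have hdeg : (ℓ - C a).totalDegree ≤ 1 := (totalDegree_sub_C_le ℓ a).trans hℓ.totalDegree_le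
  simpa [homogeneousComponent_eq_self hℓ, homogeneousComponent_of_mem (isHomogeneous_C _ a)] using
    homogeneousComponent_mem_topIdeal hY hdeg

theorem homogeneousComponent_add_smul_mem_topIdeal (hℓ : ℓ.IsHomogeneous 1)
    (hY : ℓ - C a ∈ vanishingIdeal ℂ Y) {g h : MvPolynomial (Fin n) ℂ} {d : ℕ}
    (hg : g ∈ vanishingIdeal ℂ Y) (hgd : g.totalDegree ≤ d + 1)
    (hgh : homogeneousComponent (d + 1) g = ℓ * h) (hh : h.IsHomogeneous d) :
    homogeneousComponent d g + a • h ∈ topIdeal Y := by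
  set g' := g - (ℓ - C a) * h
  have hℓh : (ℓ * h).IsHomogeneous (d + 1) := add_comm 1 d ▸ hℓ.mul hh
  have hg' : g' ∈ vanishingIdeal ℂ Y := sub_mem hg (Ideal.mul_mem_right h _ hY)
  have hg'd : g'.totalDegree ≤ d + 1 := by
    refine (totalDegree_sub _ _).trans (max_le hgd ((totalDegree_mul _ _).trans ?_))
    have := (totalDegree_sub_C_le ℓ a).trans hℓ.totalDegree_le
    have := hh.totalDegree_le
    omega
  have hg'top : homogeneousComponent (d + 1) g' = 0 := by
    simp [g', sub_mul, hgh, homogeneousComponent_eq_self hℓh, homogeneousComponent_of_mem hh]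
  have hg'd_comp : homogeneousComponent d g' = homogeneousComponent d g + a • h := by
    simp [g', sub_mul, homogeneousComponent_of_mem hℓh, homogeneousComponent_eq_self hh,
      smul_eq_C_mul]
  rw [← hg'd_comp]
  exact homogeneousComponent_mem_topIdeal hg'
    (totalDegree_le_of_homogeneousComponent_eq_zero hg'd hg'top)

end topIdeal

section permOrbit

variable {n : ℕ} (P Q : Fin n → ℂ)

theorem sum_X_sub_C_mem_vanishingIdeal_permOrbit :
    ∑ i, X i - C (∑ i, P i) ∈ vanishingIdeal ℂ (permOrbit P) := by
  rw [mem_vanishingIdeal_iff]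
  rintro _ ⟨σ, rfl⟩
  simp [Equiv.sum_comp σ P]

theorem sum_X_mul_mem_topIdeal_union {f : MvPolynomial (Fin n) ℂ}
    (hf : f ∈ topIdeal (permOrbit Q)) :
    (∑ i, X i) * f ∈ topIdeal (permOrbit P ∪ permOrbit Q) :=
  topIdeal_mul_le <| Ideal.mul_mem_mul
    (mem_topIdeal_of_sub_C_mem_vanishingIdeal isHomogeneous_sum_X
      (sum_X_sub_C_mem_vanishingIdeal_permOrbit P)) hf

theorem mem_topIdeal_of_sum_X_mul_mem (hPQ : topIdeal (permOrbit P) ≤ topIdeal (permOrbit Q))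
    (hne : ∑ i, P i ≠ ∑ i, Q i) {f : MvPolynomial (Fin n) ℂ}
    (hf : (∑ i, X i) * f ∈ topIdeal (permOrbit P ∪ permOrbit Q)) :
    f ∈ topIdeal (permOrbit Q) := by
  rw [← sum_homogeneousComponent f]
  refine sum_mem fun d _ => ?_
  obtain ⟨g, hg, hgd, hgf⟩ :=
    mem_leadingForms.mp (homogeneousComponent_mem_leadingForms hf (1 + d))
  rw [homogeneousComponent_add_mul_of_isHomogeneous_left isHomogeneous_sum_X] at hgf
  rw [add_comm] at hgd hgf
  have hQ := homogeneousComponent_add_smul_mem_topIdeal isHomogeneous_sum_X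
    (sum_X_sub_C_mem_vanishingIdeal_permOrbit Q)
    (vanishingIdeal_anti_mono Set.subset_union_right hg) hgd hgf
    (homogeneousComponent_isHomogeneous d f)
  have hP := hPQ <| homogeneousComponent_add_smul_mem_topIdeal isHomogeneous_sum_X
    (sum_X_sub_C_mem_vanishingIdeal_permOrbit P)
    (vanishingIdeal_anti_mono Set.subset_union_left hg) hgd hgf
    (homogeneousComponent_isHomogeneous d f)
  have hdiff := sub_mem hQ hP
  rwa [add_sub_add_left_eq_sub, ← sub_smul,
    Submodule.smul_mem_iff _ (sub_ne_zero.mpr hne.symm)] at hdiff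

end permOrbit

/-- multiplication by `x₁+⋯+xₙ` carries `T(S_n⟨Q⟩)` into `T(S_n⟨P,Q⟩)` (so it
induces a well-defined map of the quotients), and under the hypotheses
`T(S_n⟨P⟩) ⊆ T(S_n⟨Q⟩)` and `Σ(P) ≠ Σ(Q)` the induced map is injective. -/
theorem mult_map_well_defined_and_injective {n : ℕ} (P Q : Fin n → ℂ) :
    (∀ f ∈ topIdeal (permOrbit Q),
        (∑ i : Fin n, (X i : MvPolynomial (Fin n) ℂ)) * f ∈
          topIdeal (permOrbit P ∪ permOrbit Q)) ∧
      (topIdeal (permOrbit P) ≤ topIdeal (permOrbit Q) → ∑ i, P i ≠ ∑ i, Q i →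
        ∀ f : MvPolynomial (Fin n) ℂ,
          (∑ i : Fin n, (X i : MvPolynomial (Fin n) ℂ)) * f ∈
              topIdeal (permOrbit P ∪ permOrbit Q) →
            f ∈ topIdeal (permOrbit Q)) :=
  ⟨fun _ => sum_X_mul_mem_topIdeal_union P Q,
    fun hPQ hne _ => mem_topIdeal_of_sum_X_mul_mem P Q hPQ hne⟩

end
end

section
/- Let $n = 3$, $P = (0,0,4)$, $Q = (1,1,2)$, and $Y = S_3\langle P, Q\rangle \subseteq \mathbb{C}^3$. Then the graded components of $\widehat{A}(Y) = \mathbb{C}[x_1,x_2,x_3]/T(Y)$ have dimensions $\dim_\mathbb{C} \widehat{A}(Y)_0 = 1$, $\dim_\mathbb{C} \widehat{A}(Y)_1 = 2$, $\dim_\mathbb{C} \widehat{A}(Y)_2 = 3$, and $\widehat{A}(Y)_d = 0$ for $d \geq 3$; moreover, as $S_3$-representations (with $S_3$ permuting the variables), the degree-0 component is the trivial representation, the degree-1 component is the 2-dimensional irreducible (standard) representation, and the degree-2 component is the direct sum of the standard representation and the trivial representation. -/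
open MvPolynomial

noncomputable section

/-- The degree-`d` graded piece of the quotient `ℂ[x₁,…,xₙ]/I`: the image of the space of
homogeneous polynomials of degree `d` under the quotient map. -/
def gradedPiece {n : ℕ} (I : Ideal (MvPolynomial (Fin n) ℂ)) (d : ℕ) :
    Submodule ℂ (MvPolynomial (Fin n) ℂ ⧸ I) :=
  (homogeneousSubmodule (Fin n) ℂ d).map (Ideal.Quotient.mkₐ ℂ I).toLinearMap

lemma rename_mem_homogeneousSubmodule {n d : ℕ} (σ : Equiv.Perm (Fin n))
    {f : MvPolynomial (Fin n) ℂ} (hf : f ∈ homogeneousSubmodule (Fin n) ℂ d) :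
    rename (⇑σ) f ∈ homogeneousSubmodule (Fin n) ℂ d :=
  (mem_homogeneousSubmodule _ _).mpr ((mem_homogeneousSubmodule _ _).mp hf).rename_isHomogeneous

/-- The union of the `S₃`-orbits of `P = (0,0,4)` and `Q = (1,1,2)` in `ℂ³`. -/
def Yex : Set (Fin 3 → ℂ) := permOrbit ![(0 : ℂ), 0, 4] ∪ permOrbit ![(1 : ℂ), 1, 2]

/-- The coordinate-sum linear functional on `ℂ³`. -/
def coordSum : (Fin 3 → ℂ) →ₗ[ℂ] ℂ := ∑ i : Fin 3, LinearMap.proj i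

/-- The standard (2-dimensional irreducible) representation of `S₃`:
the subspace `{a ∈ ℂ³ : a₀ + a₁ + a₂ = 0}` of the permutation representation `ℂ³`,
on which `σ` acts by `a ↦ a ∘ σ⁻¹`. -/
def stdRep : Submodule ℂ (Fin 3 → ℂ) := LinearMap.ker coordSum

/-!
`Yex` consists of the six points `4 eᵢ` and `1 + eᵢ`, all on the plane `x₀ + x₁ + x₂ = 4`, so
`x₀ + x₁ + x₂ ∈ T(Y)`. Every function on `Yex` is the restriction of a polynomial of degree `≤ 2`
(an explicit Lagrange basis), so a homogeneous `g` of degree `≥ 3` is the top component of `g - h`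
for an interpolant `h`; hence `𝔪³ ⊆ T(Y)`. Conversely the top component of a polynomial of degree
`≤ 2` vanishing on `Yex` is a multiple of `x₀ + x₁ + x₂`, as one sees from fixed linear combinations
of its six values. So `T(Y) = (x₀ + x₁ + x₂) + 𝔪³`: the degree-1 piece is the space of linear forms
modulo `x₀ + x₁ + x₂`, modelled on `stdRep` by `a ↦ ∑ aᵢ xᵢ`, and the degree-2 piece is spanned by
the squares, modelled on `ℂ³ ≅ stdRep × ℂ` by `a ↦ ∑ aᵢ xᵢ²`. These models commute with
permutations, and `T(Y)` is permutation invariant because `Yex` is, which gives the equivariance.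
-/

section General

variable {n : ℕ}

theorem topComponent_add_of_totalDegree_lt {g h : MvPolynomial (Fin n) ℂ} {d : ℕ}
    (hg : g.IsHomogeneous d) (hg0 : g ≠ 0) (hh : h.totalDegree < d) :
    topComponent (g + h) = g := by
  have hdeg : (g + h).totalDegree = d := by
    rw [totalDegree_add_eq_left_of_totalDegree_lt (hg.totalDegree hg0 ▸ hh), hg.totalDegree hg0]
  rw [topComponent, hdeg, map_add, homogeneousComponent_of_mem hg, if_pos rfl,
    homogeneousComponent_eq_zero _ _ hh, add_zero]

theorem topComponent_rename (σ : Equiv.Perm (Fin n)) (f : MvPolynomial (Fin n) ℂ) :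
    topComponent (rename σ f) = rename σ (topComponent f) := by
  rw [topComponent, topComponent, rename_homogeneousComponent, ← renameEquiv_apply,
    totalDegree_renameEquiv]

theorem topComponent_mem_topIdeal {Y : Set (Fin n → ℂ)} {f : MvPolynomial (Fin n) ℂ}
    (hf : f ∈ vanishingIdeal ℂ Y) (hf0 : f ≠ 0) : topComponent f ∈ topIdeal Y :=
  Ideal.subset_span ⟨f, hf, hf0, rfl⟩

theorem mem_topIdeal_of_eval_add_eq_zero {Y : Set (Fin n → ℂ)} {g h : MvPolynomial (Fin n) ℂ}
    {d : ℕ} (hg : g.IsHomogeneous d) (hh : h.totalDegree < d)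
    (hvan : ∀ y ∈ Y, eval y (g + h) = 0) : g ∈ topIdeal Y := by
  rcases eq_or_ne g 0 with rfl | hg0
  · exact zero_mem _
  have hgh0 : g + h ≠ 0 := fun h0 => hg0 <| by
    rw [← topComponent_add_of_totalDegree_lt hg hg0 hh, h0, topComponent, map_zero]
  rw [← topComponent_add_of_totalDegree_lt hg hg0 hh]
  exact topComponent_mem_topIdeal hvan hgh0

theorem isHomogeneous_mem_topIdeal_of_interpolation {Y : Set (Fin n → ℂ)} {D d : ℕ}
    (hY : ∀ g : MvPolynomial (Fin n) ℂ, ∃ h, h.totalDegree < D ∧ ∀ y ∈ Y, eval y h = eval y g)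
    {g : MvPolynomial (Fin n) ℂ} (hg : g.IsHomogeneous d) (hd : D ≤ d) : g ∈ topIdeal Y := by
  obtain ⟨h, hh, hgh⟩ := hY g
  refine mem_topIdeal_of_eval_add_eq_zero hg (h := -h) ?_ fun y hy => ?_
  · rw [totalDegree_neg]; omega
  · rw [map_add, map_neg, hgh y hy, add_neg_cancel]

theorem rename_mem_topIdeal {Y : Set (Fin n → ℂ)} (σ : Equiv.Perm (Fin n))
    (hY : ∀ y ∈ Y, y ∘ σ ∈ Y) {t : MvPolynomial (Fin n) ℂ} (ht : t ∈ topIdeal Y) :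
    rename σ t ∈ topIdeal Y := by
  suffices topIdeal Y ≤ (topIdeal Y).comap (rename σ) from this ht
  refine Ideal.span_le.mpr ?_
  rintro _ ⟨f, hf, hf0, rfl⟩
  rw [SetLike.mem_coe, Ideal.mem_comap, ← topComponent_rename]
  refine topComponent_mem_topIdeal (fun y hy => ?_) ((rename_injective _ σ.injective).ne hf0)
  simpa [eval_rename] using hf _ (hY y hy)

theorem gradedPiece_eq_bot {I : Ideal (MvPolynomial (Fin n) ℂ)} {d : ℕ}
    (h : ∀ f : MvPolynomial (Fin n) ℂ, f.IsHomogeneous d → f ∈ I) : gradedPiece I d = ⊥ := by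
  refine (Submodule.eq_bot_iff _).mpr ?_
  rintro _ ⟨f, hf, rfl⟩
  exact Ideal.Quotient.eq_zero_iff_mem.mpr (h f hf)

def diagForm (k : ℕ) : (Fin n → ℂ) →ₗ[ℂ] MvPolynomial (Fin n) ℂ :=
  Fintype.linearCombination ℂ fun i => X i ^ k

theorem diagForm_mem_homogeneousSubmodule (k : ℕ) (a : Fin n → ℂ) :
    diagForm k a ∈ homogeneousSubmodule (Fin n) ℂ k := by
  rw [diagForm, Fintype.linearCombination_apply]
  exact Submodule.sum_mem _ fun i _ => Submodule.smul_mem _ _ (isHomogeneous_X_pow (R := ℂ) i k)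

theorem diagForm_const (k : ℕ) (c : ℂ) : diagForm k (fun _ : Fin n => c) = C c * ∑ i, X i ^ k := by
  simp [diagForm, Fintype.linearCombination_apply, Finset.mul_sum, smul_eq_C_mul]

theorem rename_diagForm (σ : Equiv.Perm (Fin n)) (k : ℕ) (a : Fin n → ℂ) :
    rename σ (diagForm k a) = diagForm k (a ∘ ⇑σ⁻¹) := by
  simp only [diagForm, Fintype.linearCombination_apply, map_sum, map_smul, map_pow, rename_X]
  conv_rhs => rw [← Equiv.sum_comp σ]
  simp

end General

section GradedPieceMap

variable {n d : ℕ} (I : Ideal (MvPolynomial (Fin n) ℂ)) {V : Type*} [AddCommGroup V] [Module ℂ V]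
  (L : V →ₗ[ℂ] MvPolynomial (Fin n) ℂ) (hL : ∀ v, L v ∈ homogeneousSubmodule (Fin n) ℂ d)

def gradedPieceMap : V →ₗ[ℂ] gradedPiece I d :=
  LinearMap.codRestrict _ ((Ideal.Quotient.mkₐ ℂ I).toLinearMap ∘ₗ L) fun v => ⟨L v, hL v, rfl⟩

variable {I L hL}

theorem gradedPieceMap_injective (hinj : ∀ v, L v ∈ I → v = 0) :
    Function.Injective (gradedPieceMap I L hL) := by
  refine (injective_iff_map_eq_zero _).mpr fun v hv => hinj v ?_
  exact Ideal.Quotient.eq_zero_iff_mem.mp (congrArg Subtype.val hv)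

theorem gradedPieceMap_surjective
    (hsurj : ∀ f ∈ homogeneousSubmodule (Fin n) ℂ d, ∃ v, L v - f ∈ I) :
    Function.Surjective (gradedPieceMap I L hL) := by
  rintro ⟨_, f, hf, rfl⟩
  obtain ⟨v, hv⟩ := hsurj f hf
  exact ⟨v, Subtype.ext (Ideal.Quotient.eq.mpr hv)⟩

theorem gradedPieceMap_symm_rename (hbij : Function.Bijective (gradedPieceMap I L hL))
    (σ : Equiv.Perm (Fin n)) (hI : ∀ t ∈ I, rename σ t ∈ I) (ρ : V → V)
    (hρ : ∀ v, rename σ (L v) = L (ρ v)) {f : MvPolynomial (Fin n) ℂ}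
    (hf : f ∈ homogeneousSubmodule (Fin n) ℂ d) :
    (LinearEquiv.ofBijective _ hbij).symm ⟨Ideal.Quotient.mk I (rename σ f),
        ⟨rename σ f, rename_mem_homogeneousSubmodule σ hf, rfl⟩⟩ =
      ρ ((LinearEquiv.ofBijective _ hbij).symm ⟨Ideal.Quotient.mk I f, ⟨f, hf, rfl⟩⟩) := by
  set v := (LinearEquiv.ofBijective _ hbij).symm ⟨Ideal.Quotient.mk I f, ⟨f, hf, rfl⟩⟩
  have hv : L v - f ∈ I := Ideal.Quotient.eq.mp
    (congrArg Subtype.val ((LinearEquiv.ofBijective _ hbij).apply_symm_apply _))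
  rw [LinearEquiv.symm_apply_eq]
  refine Subtype.ext (Ideal.Quotient.eq.mpr ?_).symm
  simpa [← hρ] using hI _ hv

end GradedPieceMap

def ptA (i : Fin 3) : Fin 3 → ℂ := Pi.single i 4

def ptB (i : Fin 3) : Fin 3 → ℂ := 1 + Pi.single i 1

theorem Yex_eq : Yex = Set.range ptA ∪ Set.range ptB := by
  have hP : ![(0 : ℂ), 0, 4] = ptA 2 := by ext j; fin_cases j <;> rfl
  have hQ : ![(1 : ℂ), 1, 2] = ptB 2 := by ext j; fin_cases j <;> simp [ptB]; norm_num
  have hA (σ : Equiv.Perm (Fin 3)) : ptA 2 ∘ σ = ptA (σ⁻¹ 2) := Pi.single_comp_equiv σ 2 4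
  have hB (σ : Equiv.Perm (Fin 3)) : ptB 2 ∘ σ = ptB (σ⁻¹ 2) :=
    congrArg ((1 : Fin 3 → ℂ) + ·) (Pi.single_comp_equiv σ 2 1)
  ext y
  simp only [Yex, permOrbit, hP, hQ, hA, hB, Set.mem_union, Set.mem_ofPred_eq, Set.mem_range]
  refine or_congr ⟨?_, ?_⟩ ⟨?_, ?_⟩
  · rintro ⟨σ, rfl⟩; exact ⟨_, rfl⟩
  · rintro ⟨i, rfl⟩; exact ⟨Equiv.swap i 2, by simp⟩
  · rintro ⟨σ, rfl⟩; exact ⟨_, rfl⟩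
  · rintro ⟨i, rfl⟩; exact ⟨Equiv.swap i 2, by simp⟩

theorem ptA_mem_Yex (i : Fin 3) : ptA i ∈ Yex := Yex_eq ▸ Or.inl ⟨i, rfl⟩

theorem ptB_mem_Yex (i : Fin 3) : ptB i ∈ Yex := Yex_eq ▸ Or.inr ⟨i, rfl⟩

theorem comp_perm_mem_Yex (σ : Equiv.Perm (Fin 3)) {y : Fin 3 → ℂ} (hy : y ∈ Yex) :
    y ∘ σ ∈ Yex := by
  rcases hy with ⟨τ, rfl⟩ | ⟨τ, rfl⟩
  exacts [Or.inl ⟨σ.trans τ, rfl⟩, Or.inr ⟨σ.trans τ, rfl⟩]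

def orbitQuadric (α β γ δ : ℂ) (i : Fin 3) : MvPolynomial (Fin 3) ℂ :=
  α • X i ^ 2 + β • X i + C γ + δ • ∑ j, X j ^ 2

theorem orbitQuadric_mem_restrictTotalDegree (α β γ δ : ℂ) (i : Fin 3) :
    orbitQuadric α β γ δ i ∈ restrictTotalDegree (Fin 3) ℂ 2 := by
  have hle {p : MvPolynomial (Fin 3) ℂ} (hp : p.totalDegree ≤ 2) :
      p ∈ restrictTotalDegree (Fin 3) ℂ 2 := (mem_restrictTotalDegree _ _ _).mpr hp
  refine add_mem (add_mem (add_mem ?_ ?_) (hle (by simp))) (Submodule.smul_mem _ _ ?_)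
  · exact Submodule.smul_mem _ _ (hle (by simp))
  · exact Submodule.smul_mem _ _ (hle (by simp))
  · exact Submodule.sum_mem _ fun j _ => hle (by simp)

/-- The Lagrange basis of `Yex` in degree `≤ 2`: the power sum `∑ xⱼ²` is `16` on the orbit of `P`
and `6` on that of `Q`, so it separates the two orbits. -/
def lagrangeA (i : Fin 3) : MvPolynomial (Fin 3) ℂ :=
  orbitQuadric (1 / 4) (-3 / 4) (4 / 5) (-1 / 20) i

def lagrangeB (i : Fin 3) : MvPolynomial (Fin 3) ℂ := orbitQuadric (-1) 4 (-24 / 5) (3 / 10) i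

theorem eval_ptA_lagrangeA (i j : Fin 3) : eval (ptA j) (lagrangeA i) = if i = j then 1 else 0 := by
  fin_cases i <;> fin_cases j <;>
    simp [lagrangeA, orbitQuadric, ptA, Fin.sum_univ_three] <;> norm_num

theorem eval_ptB_lagrangeA (i j : Fin 3) : eval (ptB j) (lagrangeA i) = 0 := by
  fin_cases i <;> fin_cases j <;>
    simp [lagrangeA, orbitQuadric, ptB, Fin.sum_univ_three] <;> norm_num

theorem eval_ptA_lagrangeB (i j : Fin 3) : eval (ptA j) (lagrangeB i) = 0 := by
  fin_cases i <;> fin_cases j <;>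
    simp [lagrangeB, orbitQuadric, ptA, Fin.sum_univ_three] <;> norm_num

theorem eval_ptB_lagrangeB (i j : Fin 3) : eval (ptB j) (lagrangeB i) = if i = j then 1 else 0 := by
  fin_cases i <;> fin_cases j <;>
    simp [lagrangeB, orbitQuadric, ptB, Fin.sum_univ_three] <;> norm_num

theorem exists_totalDegree_lt_three_eval_eq (g : MvPolynomial (Fin 3) ℂ) :
    ∃ h : MvPolynomial (Fin 3) ℂ, h.totalDegree < 3 ∧ ∀ y ∈ Yex, eval y h = eval y g := by
  refine ⟨∑ i, (eval (ptA i) g • lagrangeA i + eval (ptB i) g • lagrangeB i), ?_, ?_⟩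
  · refine Nat.lt_succ_of_le ((mem_restrictTotalDegree _ _ _).mp ?_)
    exact Submodule.sum_mem _ fun i _ =>
      add_mem (Submodule.smul_mem _ _ (orbitQuadric_mem_restrictTotalDegree _ _ _ _ i))
        (Submodule.smul_mem _ _ (orbitQuadric_mem_restrictTotalDegree _ _ _ _ i))
  · rw [Yex_eq]
    rintro _ (⟨j, rfl⟩ | ⟨j, rfl⟩) <;>
      simp [eval_ptA_lagrangeA, eval_ptB_lagrangeA, eval_ptA_lagrangeB, eval_ptB_lagrangeB]

theorem isHomogeneous_mem_topIdeal_Yex {g : MvPolynomial (Fin 3) ℂ} {d : ℕ}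
    (hg : g.IsHomogeneous d) (hd : 3 ≤ d) : g ∈ topIdeal Yex :=
  isHomogeneous_mem_topIdeal_of_interpolation exists_totalDegree_lt_three_eval_eq hg hd

theorem sumX_mem_topIdeal_Yex : ∑ i, X i ∈ topIdeal Yex := by
  refine mem_topIdeal_of_eval_add_eq_zero (d := 1) (h := C (-4))
    (IsHomogeneous.sum _ _ _ fun i _ => isHomogeneous_X ℂ i) (by simp) ?_
  rw [Yex_eq]
  rintro _ (⟨j, rfl⟩ | ⟨j, rfl⟩) <;> fin_cases j <;>
    simp [ptA, ptB, Fin.sum_univ_three] <;> norm_num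

def exponent (a b c : ℕ) : Fin 3 →₀ ℕ := Finsupp.equivFunOnFinite.symm ![a, b, c]

@[simp] theorem exponent_apply_zero (a b c : ℕ) : exponent a b c 0 = a := rfl
@[simp] theorem exponent_apply_one (a b c : ℕ) : exponent a b c 1 = b := rfl
@[simp] theorem exponent_apply_two (a b c : ℕ) : exponent a b c 2 = c := rfl

theorem eq_exponent (m : Fin 3 →₀ ℕ) : m = exponent (m 0) (m 1) (m 2) := by
  ext i; fin_cases i <;> rfl

@[simp] theorem exponent_inj {a b c a' b' c' : ℕ} :
    exponent a b c = exponent a' b' c' ↔ a = a' ∧ b = b' ∧ c = c' := by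
  refine ⟨fun h => ?_, by rintro ⟨rfl, rfl, rfl⟩; rfl⟩
  exact ⟨congrArg (· 0) h, congrArg (· 1) h, congrArg (· 2) h⟩

theorem exponent_zero : exponent 0 0 0 = 0 := by ext i; fin_cases i <;> rfl

theorem degree_exponent (a b c : ℕ) : (exponent a b c).degree = a + b + c := by
  rw [Finsupp.degree_eq_sum, Fin.sum_univ_three]; rfl

theorem exponent_sub_exponent (a b c a' b' c' : ℕ) :
    exponent a b c - exponent a' b' c' = exponent (a - a') (b - b') (c - c') := by
  ext i; fin_cases i <;> rfl

theorem single_eq_exponent (k : ℕ) :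
    Finsupp.single (0 : Fin 3) k = exponent k 0 0 ∧ Finsupp.single (1 : Fin 3) k = exponent 0 k 0 ∧
      Finsupp.single (2 : Fin 3) k = exponent 0 0 k := by
  refine ⟨?_, ?_, ?_⟩ <;> ext i <;> fin_cases i <;> simp

theorem monomial_exponent (a b c : ℕ) (r : ℂ) :
    monomial (exponent a b c) r = C r * X 0 ^ a * X 1 ^ b * X 2 ^ c := by
  rw [monomial_eq, Finsupp.prod_fintype _ _ fun _ => pow_zero _, Fin.prod_univ_three]
  simp [mul_assoc]

theorem coeff_exponent_eq_zero_of_totalDegree_lt {f : MvPolynomial (Fin 3) ℂ} {a b c : ℕ}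
    (h : f.totalDegree < a + b + c) : coeff (exponent a b c) f = 0 :=
  coeff_eq_zero_of_totalDegree_lt (by rwa [← Finsupp.degree_apply, degree_exponent])

theorem coeff_exponent_topComponent (f : MvPolynomial (Fin 3) ℂ) (a b c : ℕ) :
    coeff (exponent a b c) (topComponent f) =
      if a + b + c = f.totalDegree then coeff (exponent a b c) f else 0 := by
  rw [topComponent, coeff_homogeneousComponent, degree_exponent]

theorem eq_sum_monomial_of_isHomogeneous_one {q : MvPolynomial (Fin 3) ℂ} (hq : q.IsHomogeneous 1) :
    q = monomial (exponent 1 0 0) (coeff (exponent 1 0 0) q) +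
      monomial (exponent 0 1 0) (coeff (exponent 0 1 0) q) +
      monomial (exponent 0 0 1) (coeff (exponent 0 0 1) q) := by
  ext m
  rw [eq_exponent m]
  generalize m 0 = a, m 1 = b, m 2 = c
  by_cases habc : a + b + c = 1
  · obtain ⟨ha, hb, hc⟩ : a ≤ 1 ∧ b ≤ 1 ∧ c ≤ 1 := by omega
    interval_cases a <;> interval_cases b <;> interval_cases c <;> simp_all [coeff_monomial]
  · rw [hq.coeff_eq_zero (by rwa [degree_exponent])]
    simp only [coeff_add, coeff_monomial, exponent_inj]
    split_ifs <;> first | omega | simp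

theorem eq_sum_monomial_of_isHomogeneous_two {q : MvPolynomial (Fin 3) ℂ} (hq : q.IsHomogeneous 2) :
    q = monomial (exponent 2 0 0) (coeff (exponent 2 0 0) q) +
      monomial (exponent 0 2 0) (coeff (exponent 0 2 0) q) +
      monomial (exponent 0 0 2) (coeff (exponent 0 0 2) q) +
      monomial (exponent 0 1 1) (coeff (exponent 0 1 1) q) +
      monomial (exponent 1 0 1) (coeff (exponent 1 0 1) q) +
      monomial (exponent 1 1 0) (coeff (exponent 1 1 0) q) := by
  ext m
  rw [eq_exponent m]
  generalize m 0 = a, m 1 = b, m 2 = c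
  by_cases habc : a + b + c = 2
  · obtain ⟨ha, hb, hc⟩ : a ≤ 2 ∧ b ≤ 2 ∧ c ≤ 2 := by omega
    interval_cases a <;> interval_cases b <;> interval_cases c <;> simp_all [coeff_monomial]
  · rw [hq.coeff_eq_zero (by rwa [degree_exponent])]
    simp only [coeff_add, coeff_monomial, exponent_inj]
    split_ifs <;> first | omega | simp

theorem eq_sum_homogeneousComponent_of_totalDegree_le_two {σ R : Type*} [CommSemiring R]
    {f : MvPolynomial σ R} (hf : f.totalDegree ≤ 2) :
    f = homogeneousComponent 0 f + homogeneousComponent 1 f + homogeneousComponent 2 f := by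
  ext m
  simp only [coeff_add, coeff_homogeneousComponent]
  rcases lt_or_ge 2 m.degree with h | h
  · rw [coeff_eq_zero_of_totalDegree_lt (hf.trans_lt h)]
    split_ifs <;> first | omega | simp
  · interval_cases hm : m.degree <;> simp

theorem eval_eq_of_totalDegree_le_two {f : MvPolynomial (Fin 3) ℂ} (hf : f.totalDegree ≤ 2)
    (y : Fin 3 → ℂ) :
    eval y f = coeff (exponent 0 0 0) f +
      (coeff (exponent 1 0 0) f * y 0 + coeff (exponent 0 1 0) f * y 1 +
        coeff (exponent 0 0 1) f * y 2) +
      (coeff (exponent 2 0 0) f * y 0 ^ 2 + coeff (exponent 0 2 0) f * y 1 ^ 2 +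
        coeff (exponent 0 0 2) f * y 2 ^ 2 + coeff (exponent 0 1 1) f * (y 1 * y 2) +
        coeff (exponent 1 0 1) f * (y 0 * y 2) + coeff (exponent 1 1 0) f * (y 0 * y 1)) := by
  conv_lhs => rw [eq_sum_homogeneousComponent_of_totalDegree_le_two hf, homogeneousComponent_zero,
    eq_sum_monomial_of_isHomogeneous_one (homogeneousComponent_isHomogeneous 1 f),
    eq_sum_monomial_of_isHomogeneous_two (homogeneousComponent_isHomogeneous 2 f)]
  simp [monomial_exponent, coeff_homogeneousComponent, degree_exponent, exponent_zero]
  ring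

def modelSubmodule : Submodule ℂ (MvPolynomial (Fin 3) ℂ) where
  carrier := {t | coeff (exponent 0 0 0) t = 0 ∧
    coeff (exponent 1 0 0) t = coeff (exponent 0 1 0) t ∧
    coeff (exponent 0 1 0) t = coeff (exponent 0 0 1) t ∧
    coeff (exponent 0 1 1) t = coeff (exponent 0 2 0) t + coeff (exponent 0 0 2) t ∧
    coeff (exponent 1 0 1) t = coeff (exponent 2 0 0) t + coeff (exponent 0 0 2) t ∧
    coeff (exponent 1 1 0) t = coeff (exponent 2 0 0) t + coeff (exponent 0 2 0) t}
  zero_mem' := by simp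
  add_mem' := by
    rintro s t ⟨h₀, h₁, h₂, h₃, h₄, h₅⟩ ⟨g₀, g₁, g₂, g₃, g₄, g₅⟩
    simp only [Set.mem_ofPred_eq, coeff_add]
    exact ⟨by linear_combination h₀ + g₀, by linear_combination h₁ + g₁,
      by linear_combination h₂ + g₂, by linear_combination h₃ + g₃,
      by linear_combination h₄ + g₄, by linear_combination h₅ + g₅⟩
  smul_mem' := by
    rintro r t ⟨h₀, h₁, h₂, h₃, h₄, h₅⟩
    simp [h₀, h₁, h₂, h₃, h₄, h₅, mul_add]

theorem mem_modelSubmodule {t : MvPolynomial (Fin 3) ℂ} :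
    t ∈ modelSubmodule ↔ coeff (exponent 0 0 0) t = 0 ∧
      coeff (exponent 1 0 0) t = coeff (exponent 0 1 0) t ∧
      coeff (exponent 0 1 0) t = coeff (exponent 0 0 1) t ∧
      coeff (exponent 0 1 1) t = coeff (exponent 0 2 0) t + coeff (exponent 0 0 2) t ∧
      coeff (exponent 1 0 1) t = coeff (exponent 2 0 0) t + coeff (exponent 0 0 2) t ∧
      coeff (exponent 1 1 0) t = coeff (exponent 2 0 0) t + coeff (exponent 0 2 0) t :=
  Iff.rfl

/-- The ideal `(x₀ + x₁ + x₂) + 𝔪³`: the quadratic conditions of `modelSubmodule` say that the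
quadratic part is `(x₀ + x₁ + x₂) ℓ` for a linear form `ℓ`. -/
def modelIdeal : Ideal (MvPolynomial (Fin 3) ℂ) where
  toAddSubmonoid := modelSubmodule.toAddSubmonoid
  smul_mem' := by
    intro a t ht
    simp only [smul_eq_mul]
    induction a using MvPolynomial.induction_on with
    | C r => rw [← smul_eq_C_mul]; exact modelSubmodule.smul_mem r ht
    | add p q hp hq => rw [add_mul]; exact modelSubmodule.add_mem hp hq
    | mul_X p k hp =>
      rw [mul_right_comm]
      obtain ⟨h₀, h₁, h₂, -⟩ := hp
      have h00 : coeff 0 (p * t) = 0 := exponent_zero ▸ h₀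
      fin_cases k <;> simp [mem_modelSubmodule, coeff_mul_X', exponent_sub_exponent,
        single_eq_exponent, h00, h₁, h₂]

theorem mem_modelIdeal {t : MvPolynomial (Fin 3) ℂ} : t ∈ modelIdeal ↔ t ∈ modelSubmodule :=
  Iff.rfl

theorem topComponent_mem_modelIdeal {f : MvPolynomial (Fin 3) ℂ}
    (hf : ∀ y ∈ Yex, eval y f = 0) (hf0 : f ≠ 0) : topComponent f ∈ modelIdeal := by
  simp only [mem_modelIdeal, mem_modelSubmodule, coeff_exponent_topComponent]
  rcases le_or_gt 3 f.totalDegree with hD | hD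
  · simp (disch := omega) only [if_neg, add_zero, and_self]
  have eval_pt (y : Fin 3 → ℂ) (hy : y ∈ Yex) :=
    (eval_eq_of_totalDegree_le_two (by omega) y).symm.trans (hf y hy)
  have A₀ := eval_pt _ (ptA_mem_Yex 0)
  have A₁ := eval_pt _ (ptA_mem_Yex 1)
  have A₂ := eval_pt _ (ptA_mem_Yex 2)
  have B₀ := eval_pt _ (ptB_mem_Yex 0)
  have B₁ := eval_pt _ (ptB_mem_Yex 1)
  have B₂ := eval_pt _ (ptB_mem_Yex 2)
  norm_num [ptA, ptB, Pi.single_apply, Fin.ext_iff] at A₀ A₁ A₂ B₀ B₁ B₂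
  interval_cases hD' : f.totalDegree
  · refine absurd ?_ hf0
    rw [totalDegree_eq_zero_iff_eq_C.mp hD'] at hf ⊢
    simpa using hf _ (ptA_mem_Yex 0)
  · have hz (a b c : ℕ) (h : 2 ≤ a + b + c) : coeff (exponent a b c) f = 0 :=
      coeff_exponent_eq_zero_of_totalDegree_lt (by omega)
    norm_num
    exact ⟨by linear_combination (A₀ - A₁) / 4 - 4 * hz 2 0 0 le_rfl + 4 * hz 0 2 0 le_rfl,
      by linear_combination (A₁ - A₂) / 4 - 4 * hz 0 2 0 le_rfl + 4 * hz 0 0 2 le_rfl⟩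
  -- Cubature on `Yex`: for every `f` of degree `≤ 2`, the combination
  -- `f(4eᵢ)/10 - 3/20 ∑_{j ≠ i} f(4eⱼ) - 3/5 f(1 + eᵢ) + 2/5 ∑_{j ≠ i} f(1 + eⱼ)`
  -- is the coefficient of `xⱼxₖ` minus those of `xⱼ²` and `xₖ²`, where `{i, j, k} = {0, 1, 2}`.
  · norm_num
    refine ⟨?_, ?_, ?_⟩
    · linear_combination A₀ / 10 - 3 / 20 * (A₁ + A₂) - 3 / 5 * B₀ + 2 / 5 * (B₁ + B₂)
    · linear_combination A₁ / 10 - 3 / 20 * (A₀ + A₂) - 3 / 5 * B₁ + 2 / 5 * (B₀ + B₂)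
    · linear_combination A₂ / 10 - 3 / 20 * (A₀ + A₁) - 3 / 5 * B₂ + 2 / 5 * (B₀ + B₁)

theorem topIdeal_Yex_le_modelIdeal : topIdeal Yex ≤ modelIdeal :=
  Ideal.span_le.mpr <| by
    rintro _ ⟨f, hf, hf0, rfl⟩
    exact topComponent_mem_modelIdeal hf hf0

theorem diagForm_eq (k : ℕ) (a : Fin 3 → ℂ) :
    diagForm k a = monomial (exponent k 0 0) (a 0) + monomial (exponent 0 k 0) (a 1) +
      monomial (exponent 0 0 k) (a 2) := by
  simp [diagForm, Fintype.linearCombination_apply, Fin.sum_univ_three, X_pow_eq_monomial,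
    smul_monomial, single_eq_exponent]

theorem coordSum_apply (a : Fin 3 → ℂ) : coordSum a = a 0 + a 1 + a 2 := by
  simp [coordSum, Fin.sum_univ_three]

theorem comp_perm_mem_stdRep (σ : Equiv.Perm (Fin 3)) {a : Fin 3 → ℂ} (ha : a ∈ stdRep) :
    a ∘ σ ∈ stdRep := by
  simpa [stdRep, coordSum, Equiv.sum_comp] using ha

theorem finrank_stdRep : Module.finrank ℂ stdRep = 2 := by
  have hsurj : Function.Surjective coordSum := fun z =>
    ⟨fun _ => z / 3, by rw [coordSum_apply]; ring⟩
  have := coordSum.finrank_range_add_finrank_ker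
  rw [LinearMap.range_eq_top.mpr hsurj, finrank_top, Module.finrank_self,
    Module.finrank_fin_fun] at this
  rw [stdRep]; omega

theorem exists_stdRep_add_const (t : Fin 3 → ℂ) : ∃ v : stdRep, ∃ w : ℂ, ∀ i, v.1 i + w = t i :=
  ⟨⟨fun i => t i - (t 0 + t 1 + t 2) / 3, by
    rw [stdRep, LinearMap.mem_ker, coordSum_apply]; ring⟩, (t 0 + t 1 + t 2) / 3, by simp⟩

def degreeOneModel : stdRep →ₗ[ℂ] MvPolynomial (Fin 3) ℂ := diagForm 1 ∘ₗ stdRep.subtype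

def degreeTwoModel : stdRep × ℂ →ₗ[ℂ] MvPolynomial (Fin 3) ℂ :=
  diagForm 2 ∘ₗ stdRep.subtype.coprod (LinearMap.pi fun _ => LinearMap.id)

theorem degreeTwoModel_apply (v : stdRep) (w : ℂ) :
    degreeTwoModel (v, w) = diagForm 2 (fun i => v.1 i + w) := rfl

theorem bijective_gradedPieceMap_zero :
    Function.Bijective (gradedPieceMap (topIdeal Yex) (Algebra.linearMap ℂ _)
      fun z => isHomogeneous_C (Fin 3) z) := by
  refine ⟨gradedPieceMap_injective fun z hz => ?_, gradedPieceMap_surjective fun f hf => ?_⟩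
  · simpa [mem_modelIdeal, mem_modelSubmodule, exponent_zero] using
      (topIdeal_Yex_le_modelIdeal hz).1
  · refine ⟨coeff 0 f, ?_⟩
    have hf0 := Nat.le_zero.mp ((mem_homogeneousSubmodule _ _).mp hf).totalDegree_le
    rw [totalDegree_eq_zero_iff_eq_C.mp hf0]
    simp

theorem eq_zero_of_degreeOneModel_mem {v : stdRep} (hv : degreeOneModel v ∈ topIdeal Yex) :
    v = 0 := by
  obtain ⟨-, h₀₁, h₁₂, -⟩ := topIdeal_Yex_le_modelIdeal hv
  simp [degreeOneModel, diagForm_eq, coeff_monomial] at h₀₁ h₁₂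
  have hsum : v.1 0 + v.1 1 + v.1 2 = 0 := (coordSum_apply v.1).symm.trans v.2
  have h₀ : v.1 0 = 0 := by linear_combination (hsum + 2 * h₀₁ + h₁₂) / 3
  have h₁ : v.1 1 = 0 := by linear_combination (hsum - h₀₁ + h₁₂) / 3
  have h₂ : v.1 2 = 0 := by linear_combination (hsum - h₀₁ - 2 * h₁₂) / 3
  ext i
  fin_cases i <;> simp [h₀, h₁, h₂]

theorem exists_degreeOneModel_sub_mem {f : MvPolynomial (Fin 3) ℂ} (hf : f.IsHomogeneous 1) :
    ∃ v, degreeOneModel v - f ∈ topIdeal Yex := by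
  set b : Fin 3 → ℂ := ![coeff (exponent 1 0 0) f, coeff (exponent 0 1 0) f,
    coeff (exponent 0 0 1) f]
  obtain ⟨v, w, hvw⟩ := exists_stdRep_add_const b
  have hfb : f = diagForm 1 b := by
    rw [diagForm_eq]; exact eq_sum_monomial_of_isHomogeneous_one hf
  have hvb : v.1 - b = fun _ => -w := funext fun i => by
    simp only [Pi.sub_apply]; linear_combination hvw i
  refine ⟨v, ?_⟩
  rw [hfb, degreeOneModel, LinearMap.comp_apply, Submodule.subtype_apply, ← map_sub, hvb,
    diagForm_const]
  exact Ideal.mul_mem_left _ _ (by simpa using sumX_mem_topIdeal_Yex)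

theorem eq_zero_of_degreeTwoModel_mem {p : stdRep × ℂ} (hp : degreeTwoModel p ∈ topIdeal Yex) :
    p = 0 := by
  obtain ⟨v, w⟩ := p
  obtain ⟨-, -, -, h₀, h₁, h₂⟩ := topIdeal_Yex_le_modelIdeal hp
  simp [degreeTwoModel_apply, diagForm_eq, coeff_monomial] at h₀ h₁ h₂
  have hsum : v.1 0 + v.1 1 + v.1 2 = 0 := (coordSum_apply v.1).symm.trans v.2
  have hw : w = 0 := by linear_combination -(h₀ + h₁ + h₂) / 6 - hsum / 3
  have hv₀ : v.1 0 = 0 := by linear_combination hsum + h₀ + 2 * hw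
  have hv₁ : v.1 1 = 0 := by linear_combination hsum + h₁ + 2 * hw
  have hv₂ : v.1 2 = 0 := by linear_combination hsum + h₂ + 2 * hw
  refine Prod.ext (Subtype.ext (funext fun i => ?_)) hw
  fin_cases i <;> simp [hv₀, hv₁, hv₂]

/-- Modulo the multiples `xₗ (x₀ + x₁ + x₂)`, each `xⱼxₖ` is `(xᵢ² - xⱼ² - xₖ²) / 2`. -/
theorem exists_degreeTwoModel_sub_mem {f : MvPolynomial (Fin 3) ℂ} (hf : f.IsHomogeneous 2) :
    ∃ p, degreeTwoModel p - f ∈ topIdeal Yex := by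
  set h : ℂ := (coeff (exponent 0 1 1) f + coeff (exponent 1 0 1) f +
    coeff (exponent 1 1 0) f) / 2 with hh
  obtain ⟨v, w, hvw⟩ := exists_stdRep_add_const
    ![coeff (exponent 2 0 0) f + coeff (exponent 0 1 1) f - h,
      coeff (exponent 0 2 0) f + coeff (exponent 1 0 1) f - h,
      coeff (exponent 0 0 2) f + coeff (exponent 1 1 0) f - h]
  refine ⟨(v, w), ?_⟩
  have hC : (2 * C h : MvPolynomial (Fin 3) ℂ) = C (coeff (exponent 0 1 1) f) +
      C (coeff (exponent 1 0 1) f) + C (coeff (exponent 1 1 0) f) := by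
    rw [← map_ofNat C 2, ← map_mul, ← map_add, ← map_add, hh]; ring_nf
  have key : degreeTwoModel (v, w) - f = (C (coeff (exponent 0 1 1) f - h) * X 0 +
      C (coeff (exponent 1 0 1) f - h) * X 1 + C (coeff (exponent 1 1 0) f - h) * X 2) *
        ∑ j, X j := by
    rw [degreeTwoModel_apply, funext hvw, diagForm_eq]
    conv_lhs => arg 2; rw [eq_sum_monomial_of_isHomogeneous_two hf]
    simp only [monomial_exponent, Fin.sum_univ_three, map_add, map_sub, Matrix.cons_val]
    linear_combination (X 1 * X 2 + X 0 * X 2 + X 0 * X 1) * hC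
  rw [key]
  exact Ideal.mul_mem_left _ _ sumX_mem_topIdeal_Yex

theorem bijective_gradedPieceMap_one :
    Function.Bijective (gradedPieceMap (topIdeal Yex) degreeOneModel
      fun v => diagForm_mem_homogeneousSubmodule 1 v.1) :=
  ⟨gradedPieceMap_injective fun _ => eq_zero_of_degreeOneModel_mem,
    gradedPieceMap_surjective fun _ hf => exists_degreeOneModel_sub_mem hf⟩

theorem bijective_gradedPieceMap_two :
    Function.Bijective (gradedPieceMap (topIdeal Yex) degreeTwoModel
      fun _ => diagForm_mem_homogeneousSubmodule 2 _) :=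
  ⟨gradedPieceMap_injective fun _ => eq_zero_of_degreeTwoModel_mem,
    gradedPieceMap_surjective fun _ hf => exists_degreeTwoModel_sub_mem hf⟩

/-- Example 2.5: for `P = (0,0,4)`, `Q = (1,1,2)` and `Y = S₃⟨P,Q⟩`, the
graded pieces of `Â(Y) = ℂ[x₁,x₂,x₃]/T(Y)` have dimensions `1, 2, 3` in degrees `0, 1, 2` and
vanish in degrees `≥ 3`; moreover, `S₃`-equivariantly, the degree-0 piece is the trivial
representation, the degree-1 piece is the standard representation, and the degree-2 piece is the
direct sum of the standard and the trivial representation. -/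
theorem example_graded_structure :
    (Module.finrank ℂ (gradedPiece (topIdeal Yex) 0) = 1 ∧
      Module.finrank ℂ (gradedPiece (topIdeal Yex) 1) = 2 ∧
      Module.finrank ℂ (gradedPiece (topIdeal Yex) 2) = 3 ∧
      ∀ d : ℕ, 3 ≤ d → gradedPiece (topIdeal Yex) d = ⊥) ∧
    (∃ e₀ : gradedPiece (topIdeal Yex) 0 ≃ₗ[ℂ] ℂ,
      ∀ (σ : Equiv.Perm (Fin 3)) (f : MvPolynomial (Fin 3) ℂ)
        (hf : f ∈ homogeneousSubmodule (Fin 3) ℂ 0),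
        e₀ ⟨Ideal.Quotient.mk (topIdeal Yex) (rename (⇑σ) f),
              ⟨rename (⇑σ) f, rename_mem_homogeneousSubmodule σ hf, rfl⟩⟩ =
          e₀ ⟨Ideal.Quotient.mk (topIdeal Yex) f, ⟨f, hf, rfl⟩⟩) ∧
    (∃ e₁ : gradedPiece (topIdeal Yex) 1 ≃ₗ[ℂ] stdRep,
      ∀ (σ : Equiv.Perm (Fin 3)) (f : MvPolynomial (Fin 3) ℂ)
        (hf : f ∈ homogeneousSubmodule (Fin 3) ℂ 1),
        (e₁ ⟨Ideal.Quotient.mk (topIdeal Yex) (rename (⇑σ) f),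
              ⟨rename (⇑σ) f, rename_mem_homogeneousSubmodule σ hf, rfl⟩⟩ : Fin 3 → ℂ) =
          (e₁ ⟨Ideal.Quotient.mk (topIdeal Yex) f, ⟨f, hf, rfl⟩⟩ : Fin 3 → ℂ) ∘ ⇑σ⁻¹) ∧
    (∃ e₂ : gradedPiece (topIdeal Yex) 2 ≃ₗ[ℂ] stdRep × ℂ,
      ∀ (σ : Equiv.Perm (Fin 3)) (f : MvPolynomial (Fin 3) ℂ)
        (hf : f ∈ homogeneousSubmodule (Fin 3) ℂ 2),
        ((e₂ ⟨Ideal.Quotient.mk (topIdeal Yex) (rename (⇑σ) f),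
              ⟨rename (⇑σ) f, rename_mem_homogeneousSubmodule σ hf, rfl⟩⟩).1 : Fin 3 → ℂ) =
            ((e₂ ⟨Ideal.Quotient.mk (topIdeal Yex) f, ⟨f, hf, rfl⟩⟩).1 : Fin 3 → ℂ) ∘ ⇑σ⁻¹ ∧
          (e₂ ⟨Ideal.Quotient.mk (topIdeal Yex) (rename (⇑σ) f),
              ⟨rename (⇑σ) f, rename_mem_homogeneousSubmodule σ hf, rfl⟩⟩).2 =
            (e₂ ⟨Ideal.Quotient.mk (topIdeal Yex) f, ⟨f, hf, rfl⟩⟩).2) := by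
  have hI (σ : Equiv.Perm (Fin 3)) (t) : t ∈ topIdeal Yex → rename σ t ∈ topIdeal Yex :=
    rename_mem_topIdeal σ fun _ => comp_perm_mem_Yex σ
  have e₀ := LinearEquiv.ofBijective _ bijective_gradedPieceMap_zero
  have e₁ := LinearEquiv.ofBijective _ bijective_gradedPieceMap_one
  have e₂ := LinearEquiv.ofBijective _ bijective_gradedPieceMap_two
  refine ⟨⟨?_, ?_, ?_, fun d hd =>
      gradedPiece_eq_bot fun f hf => isHomogeneous_mem_topIdeal_Yex hf hd⟩,
    ⟨_, fun σ f hf => gradedPieceMap_symm_rename bijective_gradedPieceMap_zero σ (hI σ) id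
      (rename_C σ) hf⟩,
    ⟨_, fun σ f hf => congrArg Subtype.val (gradedPieceMap_symm_rename bijective_gradedPieceMap_one
      σ (hI σ) (fun v => ⟨v.1 ∘ ⇑σ⁻¹, comp_perm_mem_stdRep σ⁻¹ v.2⟩)
      (fun v => rename_diagForm σ 1 v.1) hf)⟩,
    ⟨(LinearEquiv.ofBijective _ bijective_gradedPieceMap_two).symm, fun σ f hf => ?_⟩⟩
  · rw [← e₀.finrank_eq, Module.finrank_self]
  · rw [← e₁.finrank_eq, finrank_stdRep]
  · rw [← e₂.finrank_eq, Module.finrank_prod, finrank_stdRep, Module.finrank_self]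
  · have := gradedPieceMap_symm_rename bijective_gradedPieceMap_two σ (hI σ)
      (fun p => (⟨p.1.1 ∘ ⇑σ⁻¹, comp_perm_mem_stdRep σ⁻¹ p.1.2⟩, p.2))
      (fun p => rename_diagForm σ 2 _) hf
    exact ⟨congrArg (fun p => (p.1 : Fin 3 → ℂ)) this, congrArg (fun p => p.2) this⟩
end
end
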